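/- arXiv:1612.03355 — 5 statements merged into one kernel-verified Lean document; each statement's English description precedes it below -/
import Mathlib

section
/- For every real number β, with 𝒜 = [[0,0,0],[0,0,1],[0,-1,0]] and 𝒞 = [[-cos β, -sin β, 0], [-sin β, cos β, 0], [0, 0, -1]], the commutator 𝒪 := 𝒜𝒞 - 𝒞𝒜 equals 2cos(β/2)·[[0, 0, sin(β/2)], [0, 0, -cos(β/2)], [sin(β/2), -cos(β/2), 0]]; equivalently, for every v ∈ ℝ³, 𝒪v = 2cos(β/2)·(⟨u₁, v⟩ε₃ + ⟨ε₃, v⟩u₁), where u₁ = (sin(β/2), -cos(β/2), 0) and ε₃ = (0,0,1). -/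
/-!
The commutator of `𝒜` with `𝒞` only sees `sin β` and `1 + cos β`, and the half-angle formulas
`sin β = 2 sin(β/2) cos(β/2)`, `1 + cos β = 2 cos(β/2)²` pull out the factor `2 cos(β/2)`.
What remains is the symmetrized outer product `ε₃ u₁ᵀ + u₁ ε₃ᵀ`.
-/

open Matrix

theorem Real.sin_eq_two_mul_cos_half_mul_sin_half (x : ℝ) :
    Real.sin x = 2 * Real.cos (x / 2) * Real.sin (x / 2) := by
  rw [mul_right_comm, ← Real.sin_two_mul, mul_div_cancel₀ x two_ne_zero]

theorem Real.one_add_cos_eq_two_mul_cos_half_mul_cos_half (x : ℝ) :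
    1 + Real.cos x = 2 * Real.cos (x / 2) * Real.cos (x / 2) := by
  rw [mul_assoc, ← sq, Real.cos_sq (x / 2), mul_div_cancel₀ x two_ne_zero]
  ring

theorem Matrix.commutator_rotationGenerator_reflection {R : Type*} [CommRing R] (c s : R) :
    !![0, 0, 0; 0, 0, 1; 0, -1, 0] * !![-c, -s, 0; -s, c, 0; 0, 0, -1]
      - !![-c, -s, 0; -s, c, 0; 0, 0, -1] * !![0, 0, 0; 0, 0, 1; 0, -1, 0]
      = !![0, 0, s; 0, 0, -(1 + c); s, -(1 + c), 0] := by
  ext i j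
  fin_cases i <;> fin_cases j <;> simp <;> ring

theorem Matrix.of_fin_three_eq_vecMulVec_add_vecMulVec {R : Type*} [Semiring R] (x y : R) :
    !![0, 0, x; 0, 0, y; x, y, 0]
      = vecMulVec ![0, 0, 1] ![x, y, 0] + vecMulVec ![x, y, 0] ![0, 0, 1] := by
  ext i j
  fin_cases i <;> fin_cases j <;> simp [vecMulVec]

theorem Matrix.vecMulVec_add_vecMulVec_swap_mulVec {R n : Type*} [CommSemiring R] [Fintype n]
    (a b v : n → R) :
    (vecMulVec a b + vecMulVec b a) *ᵥ v = (b ⬝ᵥ v) • a + (a ⬝ᵥ v) • b := by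
  simp [add_mulVec, vecMulVec_mulVec]

/-- For every real `β`, with `𝒜 = [[0,0,0],[0,0,1],[0,-1,0]]` and
`𝒞 = [[-cos β, -sin β, 0], [-sin β, cos β, 0], [0,0,-1]]`, the commutator
`𝒪 = 𝒜𝒞 - 𝒞𝒜` equals
`2cos(β/2)·[[0,0,sin(β/2)],[0,0,-cos(β/2)],[sin(β/2),-cos(β/2),0]]`; equivalently, for
every `v ∈ ℝ³`, `𝒪v = 2cos(β/2)·(⟨u₁,v⟩ε₃ + ⟨ε₃,v⟩u₁)` where
`u₁ = (sin(β/2), -cos(β/2), 0)` and `ε₃ = (0,0,1)`. -/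
theorem noslip_commutator_formula
    (β : ℝ) (A C O : Matrix (Fin 3) (Fin 3) ℝ)
    (hA : A = !![0, 0, 0; 0, 0, 1; 0, -1, 0])
    (hC : C = !![-Real.cos β, -Real.sin β, 0;
                 -Real.sin β,  Real.cos β, 0;
                  0,           0,         -1])
    (hO : O = A * C - C * A)
    (u₁ ε₃ : Fin 3 → ℝ)
    (hu₁ : u₁ = ![Real.sin (β/2), -Real.cos (β/2), 0])
    (hε₃ : ε₃ = ![0, 0, 1]) :
    O = (2 * Real.cos (β/2)) •
        !![0, 0, Real.sin (β/2);
           0, 0, -Real.cos (β/2);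
           Real.sin (β/2), -Real.cos (β/2), 0] ∧
    ∀ v : Fin 3 → ℝ,
      O.mulVec v = (2 * Real.cos (β/2)) • ((u₁ ⬝ᵥ v) • ε₃ + (ε₃ ⬝ᵥ v) • u₁) := by
  have hO' : O = (2 * Real.cos (β/2)) •
      !![0, 0, Real.sin (β/2);
         0, 0, -Real.cos (β/2);
         Real.sin (β/2), -Real.cos (β/2), 0] := by
    rw [hO, hA, hC, commutator_rotationGenerator_reflection,
      Real.sin_eq_two_mul_cos_half_mul_sin_half,
      Real.one_add_cos_eq_two_mul_cos_half_mul_cos_half]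
    simp [smul_of]
  refine ⟨hO', fun v => ?_⟩
  rw [hO', smul_mulVec, of_fin_three_eq_vecMulVec_add_vecMulVec,
    vecMulVec_add_vecMulVec_swap_mulVec, hu₁, hε₃]
end

section
/- Let β, φ ∈ (0, π/2), ψ ∈ (-π/2, π/2), and ϕ ∈ ℝ. Set s = sin(β/2), c = cos(β/2), ρ = √(1 - c²cos²φ), y₁ = (0, -sin φ, s·cos φ)/ρ, ε̂₁ = (1, 0, 0), ε̂₂ = (0, s·cos φ, sin φ)/ρ, and y = cos ψ · y₁ + sin ψ cos ϕ · ε̂₁ + sin ψ sin ϕ · ε̂₂ ∈ ℝ³. Then the third coordinate of y is y·ε₃ = (cos ψ · cos φ · sin(β/2)/√(1 - cos²(β/2)cos²φ)) · (1 + tan ψ · (tan φ / sin(β/2)) · sin ϕ). -/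
open Matrix Real

namespace Real

theorem cos_mul_cos_mul_mul_one_add_tan_mul_tan {x z : ℝ} (hx : cos x ≠ 0) (hz : cos z ≠ 0)
    {s : ℝ} (hs : s ≠ 0) (t : ℝ) :
    cos x * cos z * s * (1 + tan x * (tan z / s) * t) = cos x * cos z * s + sin x * sin z * t := by
  rw [tan_eq_sin_div_cos, tan_eq_sin_div_cos]
  field_simp

end Real

/-- For `β, φ ∈ (0, π/2)`, `ψ ∈ (-π/2, π/2)`, `ϕ ∈ ℝ`, with
`s = sin(β/2)`, `c = cos(β/2)`, `ρ = √(1 - c²cos²φ)`, `y₁ = (0, -sin φ, s·cos φ)/ρ`,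
`ε̂₁ = (1,0,0)`, `ε̂₂ = (0, s·cos φ, sin φ)/ρ`, and
`y = cos ψ·y₁ + sin ψ cos ϕ·ε̂₁ + sin ψ sin ϕ·ε̂₂`, the third coordinate of `y` is
`y·ε₃ = (cos ψ·cos φ·sin(β/2)/√(1 - cos²(β/2)cos²φ))·(1 + tan ψ·(tan φ/sin(β/2))·sin ϕ)`. -/
theorem wedge_invariant_density
    (β φ ψ ϕ : ℝ) (hβ : β ∈ Set.Ioo 0 (π/2)) (hφ : φ ∈ Set.Ioo 0 (π/2))
    (hψ : ψ ∈ Set.Ioo (-(π/2)) (π/2))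
    (s c ρ : ℝ)
    (hs : s = Real.sin (β/2)) (hc : c = Real.cos (β/2))
    (hρ : ρ = Real.sqrt (1 - c^2 * Real.cos φ ^ 2))
    (y₁ e₁ e₂ y : Fin 3 → ℝ)
    (hy₁ : y₁ = ρ⁻¹ • ![0, -Real.sin φ, s * Real.cos φ])
    (he₁ : e₁ = ![1, 0, 0])
    (he₂ : e₂ = ρ⁻¹ • ![0, s * Real.cos φ, Real.sin φ])
    (hy : y = Real.cos ψ • y₁ + (Real.sin ψ * Real.cos ϕ) • e₁
            + (Real.sin ψ * Real.sin ϕ) • e₂) :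
    y 2 = (Real.cos ψ * Real.cos φ * Real.sin (β/2)
            / Real.sqrt (1 - Real.cos (β/2) ^ 2 * Real.cos φ ^ 2))
          * (1 + Real.tan ψ * (Real.tan φ / Real.sin (β/2)) * Real.sin ϕ) := by
  have hcos_ψ : cos ψ ≠ 0 := (cos_pos_of_mem_Ioo hψ).ne'
  have hcos_φ : cos φ ≠ 0 :=
    (cos_pos_of_mem_Ioo ⟨by linarith [hφ.1, pi_pos], hφ.2⟩).ne'
  have hs_ne : s ≠ 0 := hs ▸ (sin_pos_of_pos_of_lt_pi (by linarith [hβ.1])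
    (by linarith [hβ.2, pi_pos])).ne'
  have hy_third : y 2 = ρ⁻¹ * (cos ψ * (s * cos φ) + sin ψ * sin ϕ * sin φ) := by
    subst hy hy₁ he₁ he₂
    simp only [Pi.add_apply, Pi.smul_apply, smul_eq_mul, cons_val_two,
      tail_cons, head_cons]
    ring
  rw [← hs, ← hc, ← hρ, hy_third, div_mul_eq_mul_div, div_eq_inv_mul,
    cos_mul_cos_mul_mul_one_add_tan_mul_tan hcos_ψ hcos_φ hs_ne]
  ring
end

section
/- Let c, c_φ, c_ψ, t, κ, κ̃, d̄ ∈ ℝ with c_φ ≠ 0 and t·c_ψ = d̄·c_φ, let ρ ∈ ℝ satisfy ρ² = 1 - c²c_φ², set x = 1 - 2c²c_φ², and define the 2×2 real matrices C = [[x, -2c·c_φ·ρ], [-2c·c_φ·ρ, -x]], R = [[1, 0], [0, -1]], and Θ = 2c·(c_ψ/c_φ)·[[0, ρ], [0, -c·c_φ]]. Then trace( I + (C·R)² - t(κ + κ̃)·(Θ + (C·R)·(Θ·R)) + t²·κ·κ̃·(Θ·R)² ) = 4·( x² - (κ + κ̃)·c²·c_φ·x·d̄ + κ·κ̃·c⁴·c_φ²·d̄²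 ). -/
/-!
`C R = !![x, s; -s, x]` with `s = 2 c c_φ ρ` is a rotation, since `x² + s² = 1` by the choice of
`ρ`; hence `tr (I + (CR)²) = 2 (x² - s²) + 2 = 4 x²`. The curvature operator `Θ` kills the first
basis vector, so the curvature terms only involve second columns, and `t c_ψ = d̄ c_φ` turns
their flight-time factors into distances.
-/

open Matrix

section WavefrontTrace

variable {α : Type*} [CommRing α]

lemma collision_mul_reflection (x s : α) :
    !![x, -s; -s, -x] * !![1, 0; 0, -1] = !![x, s; -s, x] := by
  simp

lemma trace_one_add_rotation_sq (x s : α) :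
    (1 + !![x, s; -s, x] ^ 2).trace = 2 + 2 * (x ^ 2 - s ^ 2) := by
  simp [sq, trace_fin_two, one_fin_two]
  ring

lemma trace_add_rotation_mul_mul_reflection (x s k p q : α) :
    (k • !![0, p; 0, q] + !![x, s; -s, x] * ((k • !![0, p; 0, q]) * !![1, 0; 0, -1])).trace
      = k * (q + s * p - x * q) := by
  simp [trace_fin_two, smul_of]
  ring

lemma trace_mul_reflection_sq (k p q : α) :
    (((k • !![0, p; 0, q]) * !![1, 0; 0, -1]) ^ 2).trace = k ^ 2 * q ^ 2 := by
  simp [sq, trace_fin_two]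
  ring

end WavefrontTrace

/-- With `c_φ ≠ 0`, `t·c_ψ = d̄·c_φ`, `ρ² = 1 - c²c_φ²`,
`x = 1 - 2c²c_φ²`, and the wavefront-basis matrices `C`, `R`, `Θ` below, the trace of
`I + (CR)² - t(κ + κ̃)(Θ + (CR)(ΘR)) + t²κκ̃(ΘR)²` equals
`4(x² - (κ + κ̃)c²c_φ·x·d̄ + κκ̃c⁴c_φ²·d̄²)`. -/
theorem period_two_trace_general_curvatures
    (c cφ cψ t κ κ' d ρ x : ℝ) (hcφ : cφ ≠ 0) (ht : t * cψ = d * cφ)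
    (hρ : ρ^2 = 1 - c^2 * cφ^2) (hx : x = 1 - 2*c^2*cφ^2)
    (C R Θ : Matrix (Fin 2) (Fin 2) ℝ)
    (hC : C = !![x, -(2*c*cφ*ρ); -(2*c*cφ*ρ), -x])
    (hR : R = !![1, 0; 0, -1])
    (hΘ : Θ = (2*c*(cψ/cφ)) • !![0, ρ; 0, -(c*cφ)]) :
    (1 + (C * R)^2 - (t*(κ + κ')) • (Θ + (C * R) * (Θ * R))
      + (t^2*κ*κ') • (Θ * R)^2).trace
    = 4 * (x^2 - (κ + κ') * c^2 * cφ * x * d + κ * κ' * c^4 * cφ^2 * d^2) := by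
  subst hC hR hΘ
  rw [collision_mul_reflection, trace_add, trace_sub, trace_smul, trace_smul,
    trace_one_add_rotation_sq, trace_add_rotation_mul_mul_reflection, trace_mul_reflection_sq,
    smul_eq_mul, smul_eq_mul]
  have hrot : x ^ 2 + (2 * c * cφ * ρ) ^ 2 = 1 := by
    rw [hx]; linear_combination 4 * c ^ 2 * cφ ^ 2 * hρ
  have hΘc : 2 * c * (cψ / cφ) * (c * cφ) = 2 * c ^ 2 * cψ := by field_simp
  have hlinear : 2 * c * (cψ / cφ) * (-(c * cφ) + 2 * c * cφ * ρ * ρ - x * -(c * cφ))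
      = 4 * c ^ 2 * cψ * x := by
    rw [hx]; linear_combination (2 * ρ ^ 2 - 2 * c ^ 2 * cφ ^ 2) * hΘc + 4 * c ^ 2 * cψ * hρ
  have hquadratic : (2 * c * (cψ / cφ)) ^ 2 * (-(c * cφ)) ^ 2 = 4 * c ^ 4 * cψ ^ 2 := by
    linear_combination (2 * c * (cψ / cφ) * (c * cφ) + 2 * c ^ 2 * cψ) * hΘc
  rw [hlinear, hquadratic]
  linear_combination -2 * hrot - 4 * (κ + κ') * c ^ 2 * x * ht
    + 4 * κ * κ' * c ^ 4 * (t * cψ + d * cφ) * ht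
end

section
/- Let c, c_φ ∈ (0, 1) with c²c_φ² ≠ 1/2, let κ, κ̃ ∈ ℝ, and set x = 1 - 2c²c_φ². Then there exists ε > 0 such that for every d̄ ∈ (0, ε), the quantity Tr(d̄) := 4·( x² - (κ + κ̃)·c²·c_φ·x·d̄ + κ·κ̃·c⁴·c_φ²·d̄² ) satisfies 0 < Tr(d̄) < 4, i.e., |Tr(d̄) - 2| < 2. Hence period-2 orbits of a no-slip billiard with collision points sufficiently close to a corner of inner angle less than π are linearly elliptic. -/
/-!
At `d̄ = 0` the trace is `4 (1 - 2p)²` with `p = c² c_φ² ∈ (0, 1)`, `p ≠ 1/2`, so it lies strictly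
between `0` and `4`; the trace is a polynomial in `d̄`, hence continuous, so this persists for
all small `d̄ > 0`.
-/

open Set Filter Topology

section OrderedField

variable {K : Type*} [Field K] [LinearOrder K] [IsStrictOrderedRing K]

lemma sq_one_sub_two_mul_mem_Ioo {p : K} (hp : p ∈ Ioo 0 1) (hhalf : p ≠ 1 / 2) :
    (1 - 2 * p) ^ 2 ∈ Ioo 0 1 := by
  have hne : 1 - 2 * p ≠ 0 := fun h => hhalf (by linarith)
  exact ⟨by positivity, by nlinarith [hp.1, hp.2]⟩

lemma mul_sq_mem_Ioo_zero_one {a b : K} (ha : a ∈ Ioo 0 1) (hb : b ∈ Ioo 0 1) :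
    a ^ 2 * b ^ 2 ∈ Ioo 0 1 := by
  rw [← mul_pow]
  have hab : a * b ∈ Ioo 0 1 :=
    ⟨mul_pos ha.1 hb.1, mul_lt_one_of_nonneg_of_lt_one_left ha.1.le ha.2 hb.2.le⟩
  exact ⟨pow_pos hab.1 2, pow_lt_one₀ hab.1.le hab.2 two_ne_zero⟩

end OrderedField

/-- Let `c, c_φ ∈ (0,1)` with `c²c_φ² ≠ 1/2`, `κ, κ̃ ∈ ℝ`, and
`x = 1 - 2c²c_φ²`.  Then there is `ε > 0` such that for all `d̄ ∈ (0, ε)` the trace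
`Tr(d̄) = 4(x² - (κ + κ̃)c²c_φ·x·d̄ + κκ̃c⁴c_φ²·d̄²)` satisfies `0 < Tr(d̄) < 4`,
i.e. `|Tr(d̄) - 2| < 2`: period-2 orbits with collision points sufficiently close to a
corner of inner angle less than `π` are linearly elliptic. -/
theorem period_two_orbits_near_corner_elliptic
    (c cφ : ℝ) (hc : c ∈ Set.Ioo (0:ℝ) 1) (hcφ : cφ ∈ Set.Ioo (0:ℝ) 1)
    (hhalf : c^2 * cφ^2 ≠ 1/2) (κ κ' : ℝ) (x : ℝ) (hx : x = 1 - 2*c^2*cφ^2)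
    (Tr : ℝ → ℝ)
    (hTr : ∀ d : ℝ, Tr d =
      4 * (x^2 - (κ + κ') * c^2 * cφ * x * d + κ * κ' * c^4 * cφ^2 * d^2)) :
    ∃ ε > (0:ℝ), ∀ d ∈ Set.Ioo 0 ε,
      (0 < Tr d ∧ Tr d < 4) ∧ |Tr d - 2| < 2 := by
  have hx2 : x ^ 2 ∈ Ioo 0 1 := by
    rw [hx, mul_assoc]
    exact sq_one_sub_two_mul_mem_Ioo (mul_sq_mem_Ioo_zero_one hc hcφ) hhalf
  have hTr0 : Tr 0 ∈ Ioo 0 4 := by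
    rw [hTr]
    constructor <;> nlinarith [hx2.1, hx2.2]
  have hcont : Continuous Tr := by
    rw [funext hTr]
    fun_prop
  have hnear : ∀ᶠ d in 𝓝[>] 0, Tr d ∈ Ioo 0 4 :=
    nhdsWithin_le_nhds ((hcont.tendsto 0).eventually (isOpen_Ioo.mem_nhds hTr0))
  obtain ⟨ε, hε, hsub⟩ := mem_nhdsGT_iff_exists_Ioo_subset.mp hnear
  refine ⟨ε, hε, fun d hd => ?_⟩
  obtain ⟨hpos, hlt⟩ := hsub hd
  exact ⟨⟨hpos, hlt⟩, abs_sub_lt_iff.mpr ⟨by linarith, by linarith⟩⟩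
end

section
/- For every real R > 0 there exists φ ∈ (0, π/2) such that, setting x = 1 - (4/3)·cos²φ and ζ = (1 - 2R·cos φ)/R, one has 0 < (2x - (4/3)·ζ·cos φ)² < 4. Moreover, 2x - (4/3)·ζ·cos φ = 2·(1 - 2cos φ/(3R)), so the condition 0 < (2x - (4/3)ζ cos φ)² < 4 holds if and only if cos φ < 3R and cos φ ≠ 3R/2; in particular the critical radius for the period-2 family is R₀ = cos φ/3. Hence the no-slip Sinai billiard with a circular scatterer of any radius R > 0 has linearly elliptic period-2 trajectories. -/
/-!
Clearing the denominator `R`, the trace factor is `2 (1 - t)` with `t = 2 cos φ / (3 R)`, and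
`(2 (1 - t))² ∈ (0, 4)` exactly when `0 < t < 2` and `t ≠ 1`. For existence take
`cos φ = min R (1/2)`, which lies below `3 R / 2`.
-/

open Real

/-- The trace of `dT²` on the nontrivial invariant `2`-plane for the period-2 family of
the no-slip Sinai billiard with scatterer radius `R`, at parameter `φ`, where for the
uniform mass distribution `cos²(β/2) = 2/3`, `x = 1 - (4/3)cos²φ` and
`ζ = (1 - 2R·cos φ)/R`. -/
noncomputable def sinaiTraceFactor (R φ : ℝ) : ℝ :=
  2 * (1 - (4/3) * Real.cos φ ^ 2)
    - (4/3) * ((1 - 2 * R * Real.cos φ) / R) * Real.cos φ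

lemma sinaiTraceFactor_eq {R : ℝ} (hR : R ≠ 0) (φ : ℝ) :
    sinaiTraceFactor R φ = 2 * (1 - 2 * cos φ / (3 * R)) := by
  unfold sinaiTraceFactor
  field_simp
  ring

lemma two_mul_one_sub_sq_mem_Ioo_iff (t : ℝ) :
    (0 < (2 * (1 - t)) ^ 2 ∧ (2 * (1 - t)) ^ 2 < 4) ↔ 0 < t ∧ t < 2 ∧ t ≠ 1 := by
  have h4 : (2 * (1 - t)) ^ 2 = 4 * (1 - t) ^ 2 := by ring
  rw [h4, mul_pos_iff_of_pos_left four_pos, sq_pos_iff,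
    mul_lt_iff_lt_one_right four_pos, sq_lt_one_iff_abs_lt_one, abs_sub_lt_iff, sub_ne_zero]
  constructor
  · rintro ⟨hne, h1, h2⟩
    exact ⟨by linarith, by linarith, Ne.symm hne⟩
  · rintro ⟨h0, h2, hne⟩
    exact ⟨Ne.symm hne, by linarith, by linarith⟩

lemma sinaiTraceFactor_sq_mem_Ioo_iff {R φ : ℝ} (hR : 0 < R) (hφ : 0 < cos φ) :
    (0 < sinaiTraceFactor R φ ^ 2 ∧ sinaiTraceFactor R φ ^ 2 < 4) ↔
      (cos φ < 3 * R ∧ cos φ ≠ 3 * R / 2) := by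
  have h3R : 0 < 3 * R := by positivity
  rw [sinaiTraceFactor_eq hR.ne', two_mul_one_sub_sq_mem_Ioo_iff, div_lt_iff₀ h3R,
    Ne, div_eq_one_iff_eq h3R.ne']
  constructor
  · rintro ⟨-, hlt, hne⟩
    exact ⟨by linarith, fun h => hne (by rw [h]; ring)⟩
  · rintro ⟨hlt, hne⟩
    exact ⟨by positivity, by linarith, fun h => hne (by linarith)⟩

lemma exists_cos_eq_of_mem_Ioo {c : ℝ} (hc : c ∈ Set.Ioo 0 1) :
    ∃ φ ∈ Set.Ioo 0 (π / 2), cos φ = c :=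
  ⟨arccos c, ⟨arccos_pos.2 hc.2, arccos_lt_pi_div_two.2 hc.1⟩,
    cos_arccos (by linarith [hc.1]) hc.2.le⟩

/-- For every `R > 0` there is `φ ∈ (0, π/2)` with
`0 < (2x - (4/3)ζcos φ)² < 4` where `x = 1 - (4/3)cos²φ` and `ζ = (1 - 2Rcos φ)/R`.
Moreover `2x - (4/3)ζcos φ = 2(1 - 2cos φ/(3R))`, and the condition
`0 < (2x - (4/3)ζcos φ)² < 4` holds iff `cos φ < 3R` and `cos φ ≠ 3R/2`; in particular
the critical radius for the period-2 family is `R₀ = cos φ/3`.  Hence the no-slip Sinai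
billiard with circular scatterer of any radius `R > 0` has linearly elliptic period-2
trajectories. -/
theorem noslip_sinai_billiard_elliptic_period_two (R : ℝ) (hR : 0 < R) :
    (∃ φ ∈ Set.Ioo 0 (π/2),
      0 < (sinaiTraceFactor R φ)^2 ∧ (sinaiTraceFactor R φ)^2 < 4) ∧
    (∀ φ ∈ Set.Ioo 0 (π/2),
      sinaiTraceFactor R φ = 2 * (1 - 2 * Real.cos φ / (3 * R)) ∧
      ((0 < (sinaiTraceFactor R φ)^2 ∧ (sinaiTraceFactor R φ)^2 < 4) ↔
        (Real.cos φ < 3 * R ∧ Real.cos φ ≠ 3 * R / 2))) := by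
  have cos_pos {φ : ℝ} (hφ : φ ∈ Set.Ioo 0 (π / 2)) : 0 < cos φ :=
    cos_pos_of_mem_Ioo ⟨by linarith [hφ.1, pi_pos], hφ.2⟩
  refine ⟨?_, fun φ hφ => ⟨sinaiTraceFactor_eq hR.ne' φ,
    sinaiTraceFactor_sq_mem_Ioo_iff hR (cos_pos hφ)⟩⟩
  have hc : min R (1 / 2) ∈ Set.Ioo 0 1 :=
    ⟨lt_min hR one_half_pos, (min_le_right _ _).trans_lt one_half_lt_one⟩
  obtain ⟨φ, hφ, hcos⟩ := exists_cos_eq_of_mem_Ioo hc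
  have hcR : cos φ ≤ R := hcos ▸ min_le_left _ _
  refine ⟨φ, hφ, (sinaiTraceFactor_sq_mem_Ioo_iff hR (cos_pos hφ)).2 ⟨by linarith, ?_⟩⟩
  exact (hcR.trans_lt (by linarith)).ne
end
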